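/- arXiv:1003.1170 — 4 statements merged into one kernel-verified Lean document; each statement's English description precedes it below -/
import Mathlib

section
/- Integration by parts identity for local Bayes optimality: if b^p_i = ∂_i log p and v is a C¹ vector field compactly supported in D, then ∫_D [R(b^p + v) − R(b^p)] p = (1/2) ∫_D Σ_{i,j} v_i v_j V_{ij} p ≥ 0, where R(b) = Σ_{i,j}(∂_i(V_{ij} b_j) + (1/2) b_i b_j V_{ij}). -/
open Real MeasureTheory

/-!
With `b = ∇ log p` one has `b_i p = ∂_i p`, so, `V` being symmetric, the cross terms of
`R(b + v) - R(b)` combine with `∂_i (V_ij v_j)` into a divergence: on `D`,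
`(R(b + v) - R(b)) p = Σ_i ∂_i (Σ_j V_ij v_j p) + ½ (vᵀ V v) p`.
Each `Σ_j V_ij v_j p` extends by zero to a `C¹` function with compact support, so its partial
derivatives integrate to zero; the remaining term is nonnegative because `V ≥ 0` and `p > 0`.
-/

/-- Partial derivative `∂_i f x`. -/
noncomputable def pd {d : ℕ} (i : Fin d) (f : (Fin d → ℝ) → ℝ) (x : Fin d → ℝ) : ℝ :=
  fderiv ℝ f x (Pi.single i 1)

/-- The asymptotic risk of a decision function `b`:
`R(b) = Σ_{ij}(∂_i(V_{ij} b_j) + ½ b_i b_j V_{ij})`. -/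
noncomputable def Rb {d : ℕ} (V : Fin d → Fin d → (Fin d → ℝ) → ℝ)
    (b : Fin d → (Fin d → ℝ) → ℝ) (x : Fin d → ℝ) : ℝ :=
  ∑ i, ∑ j, (pd i (fun y => V i j y * b j y) x + (1/2) * b i x * b j x * V i j x)

open Function Finset

section Support

variable {𝕜 E F : Type*} [NontriviallyNormedField 𝕜] [NormedAddCommGroup E] [NormedSpace 𝕜 E]
  [NormedAddCommGroup F] [NormedSpace 𝕜 F]

theorem ContDiffOn.contDiff_of_tsupport_subset {n : WithTop ℕ∞} {f : E → F} {s : Set E}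
    (hf : ContDiffOn 𝕜 n f s) (hs : IsOpen s) (hsupp : tsupport f ⊆ s) : ContDiff 𝕜 n f :=
  contDiff_iff_contDiffAt.2 fun x => (em (x ∈ tsupport f)).elim
    (fun hx => hf.contDiffAt (hs.mem_nhds (hsupp hx)))
    (fun hx => contDiffAt_const.congr_of_eventuallyEq (notMem_tsupport_iff_eventuallyEq.1 hx))

end Support

section IntegralFDeriv

variable {E F : Type*} [NormedAddCommGroup E] [NormedSpace ℝ E] [MeasurableSpace E] [BorelSpace E]
  [NormedAddCommGroup F] [NormedSpace ℝ F] (μ : Measure E) {f : E → F}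

theorem ContDiff.integrable_fderiv_apply [IsFiniteMeasureOnCompacts μ] (hf : ContDiff ℝ 1 f)
    (hfc : HasCompactSupport f) (v : E) : Integrable (fun x => fderiv ℝ f x v) μ :=
  ((hf.continuous_fderiv one_ne_zero).clm_apply continuous_const).integrable_of_hasCompactSupport
    (hfc.fderiv_apply ℝ v)

theorem HasCompactSupport.integral_fderiv_apply_eq_zero [FiniteDimensional ℝ E]
    [μ.IsAddHaarMeasure] (hfc : HasCompactSupport f) (hf : ContDiff ℝ 1 f) (v : E) :
    ∫ x, fderiv ℝ f x v ∂μ = 0 := by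
  simpa using integral_smul_fderiv_eq_neg_fderiv_smul_of_integrable (μ := μ) (v := v)
    (f := fun _ => (1 : ℝ)) (g := f) (by simp) (by simpa using hf.integrable_fderiv_apply μ hfc v)
    (by simpa using hf.continuous.integrable_of_hasCompactSupport hfc)
    (fun x _ => differentiableAt_const _) (fun x _ => hf.differentiable one_ne_zero x)

end IntegralFDeriv

section PartialDerivative

variable {d : ℕ} {i : Fin d} {f g : (Fin d → ℝ) → ℝ} {x : Fin d → ℝ}

theorem pd_of_notMem_tsupport (hx : x ∉ tsupport f) : pd i f x = 0 := by
  simp [pd, fderiv_of_notMem_tsupport ℝ hx]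

theorem pd_add (hf : DifferentiableAt ℝ f x) (hg : DifferentiableAt ℝ g x) :
    pd i (fun y => f y + g y) x = pd i f x + pd i g x := by
  simp [pd, fderiv_fun_add hf hg]

theorem pd_mul (hf : DifferentiableAt ℝ f x) (hg : DifferentiableAt ℝ g x) :
    pd i (fun y => f y * g y) x = pd i f x * g x + f x * pd i g x := by
  simp only [pd, fderiv_fun_mul hf hg, add_apply, smul_apply, smul_eq_mul]
  ring

theorem pd_sum {ι : Type*} (s : Finset ι) {F : ι → (Fin d → ℝ) → ℝ}
    (hF : ∀ j ∈ s, DifferentiableAt ℝ (F j) x) :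
    pd i (fun y => ∑ j ∈ s, F j y) x = ∑ j ∈ s, pd i (F j) x := by
  simp [pd, fderiv_fun_sum hF]

theorem pd_log_mul_self (hf : DifferentiableAt ℝ f x) (hfx : f x ≠ 0) :
    pd i (fun y => Real.log (f y)) x * f x = pd i f x := by
  simp only [pd, (hf.hasFDerivAt.log hfx).fderiv, smul_apply, smul_eq_mul]
  field_simp

theorem ContDiffOn.pd {m n : WithTop ℕ∞} {D : Set (Fin d → ℝ)} (hf : ContDiffOn ℝ n f D)
    (hD : IsOpen D) (hmn : m + 1 ≤ n) : ContDiffOn ℝ m (pd i f) D :=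
  (hf.fderiv_of_isOpen hD hmn).clm_apply contDiffOn_const

theorem ContDiff.integrable_pd (hf : ContDiff ℝ 1 f) (hfc : HasCompactSupport f) :
    Integrable (pd i f) :=
  hf.integrable_fderiv_apply volume hfc _

theorem HasCompactSupport.integral_pd_eq_zero (hfc : HasCompactSupport f) (hf : ContDiff ℝ 1 f) :
    ∫ x, pd i f x = 0 :=
  hfc.integral_fderiv_apply_eq_zero volume hf _

theorem setIntegral_sum_pd_eq_zero {F : Fin d → (Fin d → ℝ) → ℝ} {s : Set (Fin d → ℝ)}
    (hF : ∀ i, ContDiff ℝ 1 (F i)) (hFc : ∀ i, HasCompactSupport (F i))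
    (hs : ∀ i, tsupport (F i) ⊆ s) : ∫ x in s, ∑ i, pd i (F i) x = 0 := by
  rw [setIntegral_eq_integral_of_forall_compl_eq_zero fun x hx =>
      sum_eq_zero fun i _ => pd_of_notMem_tsupport fun h => hx (hs i h),
    integral_finsetSum _ fun i _ => (hF i).integrable_pd (hFc i)]
  exact sum_eq_zero fun i _ => (hFc i).integral_pd_eq_zero (hF i)

end PartialDerivative

section Risk

variable {d : ℕ} {V : Fin d → Fin d → (Fin d → ℝ) → ℝ} {b v : Fin d → (Fin d → ℝ) → ℝ}
  {p : (Fin d → ℝ) → ℝ} {x : Fin d → ℝ}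

theorem Rb_add_sub_Rb (hV : ∀ i j, DifferentiableAt ℝ (V i j) x)
    (hb : ∀ j, DifferentiableAt ℝ (b j) x) (hv : ∀ j, DifferentiableAt ℝ (v j) x)
    (hVsymm : ∀ i j, V i j x = V j i x) :
    Rb V (fun i y => b i y + v i y) x - Rb V b x
      = ∑ i, ∑ j, (pd i (fun y => V i j y * v j y) x + b i x * v j x * V i j x)
        + (1/2) * ∑ i, ∑ j, v i x * v j x * V i j x := by
  have hcross : ∑ i, ∑ j, v i x * b j x * V i j x = ∑ i, ∑ j, b i x * v j x * V i j x := by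
    rw [sum_comm]
    exact sum_congr rfl fun i _ => sum_congr rfl fun j _ => by rw [hVsymm]; ring
  have hlin : ∀ i j, pd i (fun y => V i j y * (b j y + v j y)) x
      = pd i (fun y => V i j y * b j y) x + pd i (fun y => V i j y * v j y) x := fun i j => by
    simp only [mul_add]
    exact pd_add ((hV i j).mul (hb j)) ((hV i j).mul (hv j))
  calc Rb V (fun i y => b i y + v i y) x - Rb V b x
      = ∑ i, ∑ j, (pd i (fun y => V i j y * v j y) x + (1/2) * (b i x * v j x * V i j x)
          + (1/2) * (v i x * b j x * V i j x) + (1/2) * (v i x * v j x * V i j x)) := by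
        simp only [Rb, ← sum_sub_distrib, hlin]
        exact sum_congr rfl fun i _ => sum_congr rfl fun j _ => by ring
    _ = _ := by
        simp only [sum_add_distrib, ← mul_sum, hcross]
        ring

theorem pd_sum_mul_mul (hV : ∀ i j, DifferentiableAt ℝ (V i j) x)
    (hv : ∀ j, DifferentiableAt ℝ (v j) x) (hp : DifferentiableAt ℝ p x) (i : Fin d) :
    pd i (fun y => ∑ j, V i j y * v j y * p y) x
      = ∑ j, (pd i (fun y => V i j y * v j y) x * p x + V i j x * v j x * pd i p x) := by
  rw [pd_sum (F := fun j y => V i j y * v j y * p y) _ fun j _ => ((hV i j).mul (hv j)).mul hp]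
  exact sum_congr rfl fun j _ => pd_mul ((hV i j).mul (hv j)) hp

theorem Rb_add_sub_Rb_mul (hV : ∀ i j, DifferentiableAt ℝ (V i j) x)
    (hb : ∀ j, DifferentiableAt ℝ (b j) x) (hv : ∀ j, DifferentiableAt ℝ (v j) x)
    (hp : DifferentiableAt ℝ p x) (hVsymm : ∀ i j, V i j x = V j i x)
    (hbp : ∀ i, b i x * p x = pd i p x) :
    (Rb V (fun i y => b i y + v i y) x - Rb V b x) * p x
      = ∑ i, pd i (fun y => ∑ j, V i j y * v j y * p y) x
        + (1/2) * ((∑ i, ∑ j, v i x * v j x * V i j x) * p x) := by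
  rw [Rb_add_sub_Rb hV hb hv hVsymm, add_mul, mul_assoc (1/2 : ℝ), sum_mul]
  congr 1
  refine sum_congr rfl fun i _ => ?_
  rw [pd_sum_mul_mul hV hv hp, sum_mul, ← hbp]
  exact sum_congr rfl fun j _ => by ring

theorem Rb_add_sub_Rb_mul_of_pd_log {D : Set (Fin d → ℝ)} (hD : IsOpen D)
    (hV : ∀ i j, ContDiffOn ℝ 1 (V i j) D) (hv : ∀ i, ContDiffOn ℝ 1 (v i) D)
    (hp : ContDiffOn ℝ 2 p D) (hppos : ∀ x ∈ D, 0 < p x) (hVsymm : ∀ i j, V i j x = V j i x)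
    (hx : x ∈ D) :
    (Rb V (fun i y => pd i (fun z => Real.log (p z)) y + v i y) x
        - Rb V (fun i => pd i (fun z => Real.log (p z))) x) * p x
      = ∑ i, pd i (fun y => ∑ j, V i j y * v j y * p y) x
        + (1/2) * ((∑ i, ∑ j, v i x * v j x * V i j x) * p x) := by
  have hdiff {f : (Fin d → ℝ) → ℝ} (hf : ContDiffOn ℝ 1 f D) : DifferentiableAt ℝ f x :=
    (hf.differentiableOn one_ne_zero).differentiableAt (hD.mem_nhds hx)
  have hp1 : ContDiffOn ℝ 1 p D := hp.of_le one_le_two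
  have hlog : ContDiffOn ℝ 2 (fun z => Real.log (p z)) D := hp.log fun y hy => (hppos y hy).ne'
  exact Rb_add_sub_Rb_mul (fun i j => hdiff (hV i j)) (fun j => hdiff (hlog.pd hD le_rfl))
    (fun j => hdiff (hv j)) (hdiff hp1) hVsymm
    (fun i => pd_log_mul_self (hdiff hp1) (hppos x hx).ne')

end Risk

/-- local Bayes optimality. For `b^p_i = ∂_i log p` and `v` a `C¹`
vector field compactly supported in `D`,
`∫_D [R(b^p+v) − R(b^p)] p = ½ ∫_D Σ_{ij} v_i v_j V_{ij} p ≥ 0`. -/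
theorem stmt3 {d : ℕ} (D : Set (Fin d → ℝ)) (hD : IsOpen D)
    (V : Fin d → Fin d → (Fin d → ℝ) → ℝ)
    (hV : ∀ i j, ContDiffOn ℝ 1 (V i j) D)
    (hVsym : ∀ i j x, V i j x = V j i x)
    (hVpsd : ∀ x ∈ D, ∀ c : Fin d → ℝ, 0 ≤ ∑ i, ∑ j, c i * c j * V i j x)
    (p : (Fin d → ℝ) → ℝ) (hp : ContDiffOn ℝ 2 p D) (hppos : ∀ x ∈ D, 0 < p x)
    (bp : Fin d → (Fin d → ℝ) → ℝ)
    (hbp : ∀ i x, bp i x = pd i (fun y => Real.log (p y)) x)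
    (v : Fin d → (Fin d → ℝ) → ℝ) (hv : ∀ i, ContDiffOn ℝ 1 (v i) D)
    (K : Set (Fin d → ℝ)) (hK : IsCompact K) (hKD : K ⊆ D)
    (hsupp : ∀ i, ∀ x ∉ K, v i x = 0) :
    (∫ x in D, (Rb V (fun i y => bp i y + v i y) x - Rb V bp x) * p x)
        = (1/2) * ∫ x in D, (∑ i, ∑ j, v i x * v j x * V i j x) * p x ∧
      0 ≤ (1/2) * ∫ x in D, (∑ i, ∑ j, v i x * v j x * V i j x) * p x := by
  obtain rfl : bp = fun i => pd i (fun y => Real.log (p y)) := funext fun i => funext (hbp i)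
  set F : Fin d → (Fin d → ℝ) → ℝ := fun i y => ∑ j, V i j y * v j y * p y
  set Q : (Fin d → ℝ) → ℝ := fun x => (∑ i, ∑ j, v i x * v j x * V i j x) * p x
  have hp1 : ContDiffOn ℝ 1 p D := hp.of_le one_le_two
  have hFK i : tsupport (F i) ⊆ K :=
    closure_minimal (support_subset_iff'.2 fun x hx => by simp [F, hsupp _ x hx]) hK.isClosed
  have hQK : tsupport Q ⊆ K :=
    closure_minimal (support_subset_iff'.2 fun x hx => by simp [Q, hsupp _ x hx]) hK.isClosed
  have hF i : ContDiff ℝ 1 (F i) :=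
    (ContDiffOn.sum fun j _ => ((hV i j).mul (hv j)).mul hp1).contDiff_of_tsupport_subset hD
      ((hFK i).trans hKD)
  have hFc i : HasCompactSupport (F i) := hK.of_isClosed_subset (isClosed_tsupport _) (hFK i)
  have hQ : Integrable Q :=
    ((continuousOn_finsetSum _ fun i _ => continuousOn_finsetSum _ fun j _ =>
      ((hv i).continuousOn.mul (hv j).continuousOn).mul (hV i j).continuousOn).mul
        hp1.continuousOn).continuous_of_tsupport_subset hD (hQK.trans hKD)
      |>.integrable_of_hasCompactSupport (hK.of_isClosed_subset (isClosed_tsupport _) hQK)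
  refine ⟨?_, mul_nonneg one_half_pos.le (setIntegral_nonneg hD.measurableSet fun x hx =>
    mul_nonneg (hVpsd x hx _) (hppos x hx).le)⟩
  rw [setIntegral_congr_fun hD.measurableSet fun x hx =>
      Rb_add_sub_Rb_mul_of_pd_log hD hV hv hp hppos (hVsym · · x) hx,
    integral_add (integrable_finsetSum _ fun i _ => (hF i).integrable_pd (hFc i)).integrableOn
      (hQ.const_mul _).integrableOn,
    setIntegral_sum_pd_eq_zero hF hFc fun i => (hFK i).trans hKD, zero_add, integral_const_mul]
end

section
/- On D = (a,b) ⊆ ℝ with C² positive functions p and V, no nonconstant positive C² function h satisfies (p V h')' = 0 on (a,b) if and only if ∫_a^c (pV)^{-1} = ∞ and ∫_c^b (pV)^{-1} = ∞ for some (equivalently every) c ∈ (a,b). -/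
open Real MeasureTheory Set Filter Topology

lemma constOn {D : Set ℝ} (hD : D.OrdConnected) {g : ℝ → ℝ}
    (hg : ∀ x ∈ D, HasDerivAt g 0 x) {x y : ℝ} (hx : x ∈ D) (hy : y ∈ D) :
    g x = g y := by
  wlog hxy : x ≤ y generalizing x y
  · exact (this hy hx (le_of_not_ge hxy)).symm
  have hsub : Icc x y ⊆ D := hD.out hx hy
  have := constant_of_has_deriv_right_zero (f := g) (a := x) (b := y)
    (fun z hz => (hg z (hsub hz)).continuousAt.continuousWithinAt)
    (fun z hz => (hg z (hsub (Ico_subset_Icc_self hz))).hasDerivWithinAt)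
  exact (this y (right_mem_Icc.2 hxy)).symm

lemma auxLeft {a : EReal} {c M : ℝ} {f : ℝ → ℝ} (hac : a < (c : EReal))
    (hfi : ∀ t : ℝ, a < (t : EReal) → t < c → IntegrableOn f (Ioc t c))
    (hnn : ∀ x : ℝ, a < (x : EReal) → x ≤ c → 0 ≤ f x)
    (hbd : ∀ t : ℝ, a < (t : EReal) → t < c → (∫ x in Ioc t c, f x) ≤ M) :
    IntegrableOn f {x : ℝ | a < (x : EReal) ∧ x < c} := by
  have key : ∀ t : ℝ, a < (t : EReal) → t < c → (∫ x in Ioc t c, ‖f x‖) ≤ M := by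
    intro t h1 h2
    rw [setIntegral_congr_fun measurableSet_Ioc
      (fun x hx => Real.norm_of_nonneg (hnn x (lt_trans h1 (EReal.coe_lt_coe_iff.2 hx.1)) hx.2))]
    exact hbd t h1 h2
  induction a using EReal.rec with
  | bot =>
    have hset : {x : ℝ | (⊥ : EReal) < (x : EReal) ∧ x < c} = Iio c := by
      ext x; simp [EReal.bot_lt_coe]
    rw [hset]
    have hseq : ∀ i : ℕ, c - ((i : ℝ) + 1) < c := by
      intro i; nlinarith [Nat.cast_nonneg (α := ℝ) i]
    have htend : Tendsto (fun i : ℕ => c - ((i : ℝ) + 1)) atTop atBot := by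
      apply tendsto_atBot_add_const_left atTop c
      have h0 : Tendsto (fun i : ℕ => ((i : ℝ) + 1)) atTop atTop :=
        tendsto_atTop_add_const_right _ 1 tendsto_natCast_atTop_atTop
      simpa [sub_eq_add_neg] using tendsto_neg_atBot_iff.2 h0
    have := integrableOn_Iic_of_intervalIntegral_norm_bounded
      (f := f) (μ := volume) (l := atTop) M c
      (fun i => hfi _ (EReal.bot_lt_coe _) (hseq i)) htend ?_
    · exact this.mono_set Iio_subset_Iic_self
    · refine Eventually.of_forall fun i => ?_
      rw [intervalIntegral.integral_of_le (hseq i).le]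
      exact key _ (EReal.bot_lt_coe _) (hseq i)
  | coe a₀ =>
    have hac' : a₀ < c := EReal.coe_lt_coe_iff.1 hac
    have hset : {x : ℝ | (a₀ : EReal) < (x : EReal) ∧ x < c} = Ioo a₀ c := by
      ext x; simp [EReal.coe_lt_coe_iff]
    rw [hset]
    set t : ℕ → ℝ := fun i => a₀ + (c - a₀) / ((i : ℝ) + 2) with ht
    have hmem : ∀ i, a₀ < t i ∧ t i < c := by
      intro i
      have h2 : (0 : ℝ) < (i : ℝ) + 2 := by positivity
      constructor
      · have : 0 < (c - a₀) / ((i : ℝ) + 2) := div_pos (by linarith) h2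
        simp [ht]; linarith
      · have : (c - a₀) / ((i : ℝ) + 2) < c - a₀ :=
          div_lt_self (by linarith) (by nlinarith [Nat.cast_nonneg (α := ℝ) i])
        simp only [ht]; linarith
    have htend : Tendsto t atTop (𝓝 a₀) := by
      have h0 : Tendsto (fun i : ℕ => ((i : ℝ) + 2)) atTop atTop :=
        tendsto_atTop_add_const_right _ 2 tendsto_natCast_atTop_atTop
      have := (tendsto_const_nhds (x := c - a₀) (f := atTop (α := ℕ))).div_atTop h0
      simpa using tendsto_const_nhds.add this
    have := integrableOn_Ioc_of_intervalIntegral_norm_bounded_left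
      (f := f) (l := atTop) (I := M) (a₀ := a₀) (b := c) (a := t)
      (fun i => hfi _ (EReal.coe_lt_coe_iff.2 (hmem i).1) (hmem i).2) htend
      (Eventually.of_forall fun i => key _ (EReal.coe_lt_coe_iff.2 (hmem i).1) (hmem i).2)
    exact this.mono_set Ioo_subset_Ioc_self
  | top => exact absurd hac (by simp)

lemma auxRight {b : EReal} {c M : ℝ} {f : ℝ → ℝ} (hcb : (c : EReal) < b)
    (hfi : ∀ t : ℝ, (t : EReal) < b → c < t → IntegrableOn f (Ioc c t))
    (hnn : ∀ x : ℝ, (x : EReal) < b → c ≤ x → 0 ≤ f x)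
    (hbd : ∀ t : ℝ, (t : EReal) < b → c < t → (∫ x in Ioc c t, f x) ≤ M) :
    IntegrableOn f {x : ℝ | c < x ∧ (x : EReal) < b} := by
  have key : ∀ t : ℝ, (t : EReal) < b → c < t → (∫ x in Ioc c t, ‖f x‖) ≤ M := by
    intro t h1 h2
    rw [setIntegral_congr_fun measurableSet_Ioc
      (fun x hx => Real.norm_of_nonneg
        (hnn x (lt_of_le_of_lt (EReal.coe_le_coe_iff.2 hx.2) h1) hx.1.le))]
    exact hbd t h1 h2
  induction b using EReal.rec with
  | bot => exact absurd hcb (by simp)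
  | coe b₀ =>
    have hcb' : c < b₀ := EReal.coe_lt_coe_iff.1 hcb
    have hset : {x : ℝ | c < x ∧ (x : EReal) < (b₀ : EReal)} = Ioo c b₀ := by
      ext x; simp [EReal.coe_lt_coe_iff]
    rw [hset]
    set t : ℕ → ℝ := fun i => b₀ - (b₀ - c) / ((i : ℝ) + 2) with ht
    have hmem : ∀ i, c < t i ∧ t i < b₀ := by
      intro i
      have h2 : (0 : ℝ) < (i : ℝ) + 2 := by positivity
      constructor
      · have : (b₀ - c) / ((i : ℝ) + 2) < b₀ - c :=
          div_lt_self (by linarith) (by nlinarith [Nat.cast_nonneg (α := ℝ) i])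
        simp only [ht]; linarith
      · have : 0 < (b₀ - c) / ((i : ℝ) + 2) := div_pos (by linarith) h2
        simp only [ht]; linarith
    have htend : Tendsto t atTop (𝓝 b₀) := by
      have h0 : Tendsto (fun i : ℕ => ((i : ℝ) + 2)) atTop atTop :=
        tendsto_atTop_add_const_right _ 2 tendsto_natCast_atTop_atTop
      have := (tendsto_const_nhds (x := b₀ - c) (f := atTop (α := ℕ))).div_atTop h0
      simpa using tendsto_const_nhds.sub this
    have := integrableOn_Ioc_of_intervalIntegral_norm_bounded_right
      (f := f) (l := atTop) (I := M) (a := c) (b₀ := b₀) (b := t)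
      (fun i => hfi _ (EReal.coe_lt_coe_iff.2 (hmem i).2) (hmem i).1) htend
      (Eventually.of_forall fun i => key _ (EReal.coe_lt_coe_iff.2 (hmem i).2) (hmem i).1)
    exact this.mono_set Ioo_subset_Ioc_self
  | top =>
    have hset : {x : ℝ | c < x ∧ (x : EReal) < (⊤ : EReal)} = Ioi c := by
      ext x; simp [EReal.coe_lt_top]
    rw [hset]
    have hseq : ∀ i : ℕ, c < c + ((i : ℝ) + 1) := by
      intro i; nlinarith [Nat.cast_nonneg (α := ℝ) i]
    have htend : Tendsto (fun i : ℕ => c + ((i : ℝ) + 1)) atTop atTop :=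
      tendsto_atTop_add_const_left _ c
        (tendsto_atTop_add_const_right _ 1 tendsto_natCast_atTop_atTop)
    refine integrableOn_Ioi_of_intervalIntegral_norm_bounded
      (f := f) (μ := volume) (l := atTop) M c
      (fun i => hfi _ (EReal.coe_lt_top _) (hseq i)) htend ?_
    refine Eventually.of_forall fun i => ?_
    rw [intervalIntegral.integral_of_le (hseq i).le]
    exact key _ (EReal.coe_lt_top _) (hseq i)

lemma div_le_div_of_nonneg_right' {u v k : ℝ} (hu : 0 < u) (hk : 0 < k) :
    (v - u) / k ≤ v / k := by
  have : 0 < k⁻¹ := inv_pos.2 hk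
  rw [div_eq_mul_inv, div_eq_mul_inv]
  nlinarith

/-- Brown's condition in one dimension. On `D = (a,b)` (endpoints possibly
infinite) with continuous positive `p, V`, no nonconstant positive solution `h` of
`(pVh')' = 0` exists on `D` iff the improper integrals of `(pV)⁻¹` diverge at both
endpoints (for some `c ∈ D`). -/
theorem stmt5 (a b : EReal) (hab : a < b) (p V : ℝ → ℝ)
    (D : Set ℝ) (hDdef : D = {x : ℝ | a < (x : EReal) ∧ (x : EReal) < b})
    (hp : ContinuousOn p D) (hV : ContinuousOn V D)
    (hppos : ∀ x ∈ D, 0 < p x) (hVpos : ∀ x ∈ D, 0 < V x) :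
    (∀ h h' : ℝ → ℝ,
        (∀ x ∈ D, HasDerivAt h (h' x) x) →
        (∀ x ∈ D, 0 < h x) →
        (∀ x ∈ D, HasDerivAt (fun y => p y * V y * h' y) 0 x) →
        ∃ c : ℝ, ∀ x ∈ D, h x = c)
      ↔ (∃ c ∈ D,
          ¬ IntegrableOn (fun x => (p x * V x)⁻¹) {x ∈ D | x < c} ∧
          ¬ IntegrableOn (fun x => (p x * V x)⁻¹) {x ∈ D | c < x}) := by
  have hDo : IsOpen D := by
    rw [hDdef]
    exact isOpen_Ioo.preimage continuous_coe_real_ereal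
  have hDord : D.OrdConnected := by
    constructor
    intro x hx y hy z hz
    rw [hDdef] at hx hy ⊢
    exact ⟨lt_of_lt_of_le hx.1 (EReal.coe_le_coe_iff.2 hz.1),
      lt_of_le_of_lt (EReal.coe_le_coe_iff.2 hz.2) hy.2⟩
  set f : ℝ → ℝ := fun x => (p x * V x)⁻¹ with hf
  have hpVne : ∀ x ∈ D, p x * V x ≠ 0 :=
    fun x hx => (mul_pos (hppos x hx) (hVpos x hx)).ne'
  have hfc : ContinuousOn f D := (hp.mul hV).inv₀ hpVne
  have hfpos : ∀ x ∈ D, 0 < f x :=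
    fun x hx => inv_pos.2 (mul_pos (hppos x hx) (hVpos x hx))
  have hIntInt : ∀ c ∈ D, ∀ x ∈ D, IntervalIntegrable f volume c x :=
    fun c hc x hx => (hfc.mono (hDord.uIcc_subset hc hx)).intervalIntegrable
  constructor
  · intro H
    by_contra hno
    push_neg at hno
    obtain ⟨c, hc1, hc2⟩ := EReal.exists_between_coe_real hab
    have hcD : c ∈ D := by rw [hDdef]; exact ⟨hc1, hc2⟩
    obtain ⟨d, hd1, hd2⟩ := EReal.exists_between_coe_real hc2
    have hdD : d ∈ D := by rw [hDdef]; exact ⟨hc1.trans hd1, hd2⟩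
    have hcd : c < d := EReal.coe_lt_coe_iff.1 hd1
    have hSmeas : MeasurableSet {x ∈ D | x < c} :=
      hDo.measurableSet.inter measurableSet_Iio
    have hS'meas : MeasurableSet {x ∈ D | c < x} :=
      hDo.measurableSet.inter measurableSet_Ioi
    by_cases hInt : IntegrableOn f {x ∈ D | x < c}
    · -- left integrable : build increasing h
      set K := ∫ x in {x ∈ D | x < c}, f x with hK
      have hK0 : 0 ≤ K :=
        setIntegral_nonneg hSmeas fun x hx => (hfpos x hx.1).le
      set h : ℝ → ℝ := fun x => (1 + K) + ∫ t in c..x, f t with hh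
      have hderiv : ∀ x ∈ D, HasDerivAt h (f x) x := by
        intro x hx
        exact (intervalIntegral.integral_hasDerivAt_right (hIntInt c hcD x hx)
          (hfc.stronglyMeasurableAtFilter hDo x hx)
          (hfc.continuousAt (hDo.mem_nhds hx))).const_add _
      have hposh : ∀ x ∈ D, 0 < h x := by
        intro x hx
        rcases le_or_gt c x with hcx | hxc
        · have : 0 ≤ ∫ t in c..x, f t :=
            intervalIntegral.integral_nonneg hcx
              (fun u hu => (hfpos u (hDord.out hcD hx hu)).le)
          simp only [hh]; linarith
        · have h1 : ∫ t in c..x, f t = -∫ t in x..c, f t :=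
            (intervalIntegral.integral_symm x c)
          have h2 : ∫ t in x..c, f t = ∫ t in Ioo x c, f t := by
            rw [intervalIntegral.integral_of_le hxc.le,
              integral_Ioc_eq_integral_Ioo]
          have hsub : Ioo x c ⊆ {x ∈ D | x < c} := by
            intro y hy
            exact ⟨hDord.out hx hcD ⟨hy.1.le, hy.2.le⟩, hy.2⟩
          have h3 : ∫ t in Ioo x c, f t ≤ K := by
            apply setIntegral_mono_set hInt
            · exact (ae_restrict_iff' hSmeas).2
                (Eventually.of_forall fun y hy => (hfpos y hy.1).le)
            · exact HasSubset.Subset.eventuallyLE hsub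
          simp only [hh]; rw [h1, h2]; linarith
      have hODE : ∀ x ∈ D, HasDerivAt (fun y => p y * V y * f y) 0 x := by
        intro x hx
        refine (hasDerivAt_const x (1:ℝ)).congr_of_eventuallyEq ?_
        filter_upwards [hDo.mem_nhds hx] with y hy
        exact mul_inv_cancel₀ (hpVne y hy)
      obtain ⟨k, hk⟩ := H h f hderiv hposh hODE
      have hlt : h c < h d := by
        have hpos' : 0 < ∫ t in c..d, f t :=
          intervalIntegral.intervalIntegral_pos_of_pos_on (hIntInt c hcD d hdD)
            (fun u hu => hfpos u (hDord.out hcD hdD ⟨hu.1.le, hu.2.le⟩)) hcd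
        simp only [hh, intervalIntegral.integral_same]
        linarith
      rw [hk c hcD, hk d hdD] at hlt
      exact lt_irrefl _ hlt
    · -- right integrable
      replace hInt := hno c hcD hInt
      set K := ∫ x in {x ∈ D | c < x}, f x with hK
      have hK0 : 0 ≤ K :=
        setIntegral_nonneg hS'meas fun x hx => (hfpos x hx.1).le
      set h : ℝ → ℝ := fun x => (1 + K) - ∫ t in c..x, f t with hh
      set h' : ℝ → ℝ := fun x => -f x with hh'
      have hderiv : ∀ x ∈ D, HasDerivAt h (h' x) x := by
        intro x hx
        exact (intervalIntegral.integral_hasDerivAt_right (hIntInt c hcD x hx)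
          (hfc.stronglyMeasurableAtFilter hDo x hx)
          (hfc.continuousAt (hDo.mem_nhds hx))).const_sub _
      have hposh : ∀ x ∈ D, 0 < h x := by
        intro x hx
        rcases le_or_gt x c with hxc | hcx
        · have h1 : ∫ t in c..x, f t = -∫ t in x..c, f t :=
            (intervalIntegral.integral_symm x c)
          have : 0 ≤ ∫ t in x..c, f t :=
            intervalIntegral.integral_nonneg hxc
              (fun u hu => (hfpos u (hDord.out hx hcD hu)).le)
          simp only [hh]; rw [h1]; linarith
        · have h2 : ∫ t in c..x, f t = ∫ t in Ioo c x, f t := by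
            rw [intervalIntegral.integral_of_le hcx.le,
              integral_Ioc_eq_integral_Ioo]
          have hsub : Ioo c x ⊆ {x ∈ D | c < x} := by
            intro y hy
            exact ⟨hDord.out hcD hx ⟨hy.1.le, hy.2.le⟩, hy.1⟩
          have h3 : ∫ t in Ioo c x, f t ≤ K := by
            apply setIntegral_mono_set hInt
            · exact (ae_restrict_iff' hS'meas).2
                (Eventually.of_forall fun y hy => (hfpos y hy.1).le)
            · exact HasSubset.Subset.eventuallyLE hsub
          simp only [hh]; rw [h2]; linarith
      have hODE : ∀ x ∈ D, HasDerivAt (fun y => p y * V y * h' y) 0 x := by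
        intro x hx
        refine (hasDerivAt_const x (-1:ℝ)).congr_of_eventuallyEq ?_
        filter_upwards [hDo.mem_nhds hx] with y hy
        simp only [hh', mul_neg]
        rw [mul_inv_cancel₀ (hpVne y hy)]
      obtain ⟨k, hk⟩ := H h h' hderiv hposh hODE
      have hlt : h d < h c := by
        have hpos' : 0 < ∫ t in c..d, f t :=
          intervalIntegral.intervalIntegral_pos_of_pos_on (hIntInt c hcD d hdD)
            (fun u hu => hfpos u (hDord.out hcD hdD ⟨hu.1.le, hu.2.le⟩)) hcd
        simp only [hh, intervalIntegral.integral_same]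
        linarith
      rw [hk c hcD, hk d hdD] at hlt
      exact lt_irrefl _ hlt
  · rintro ⟨c, hcD, hL, hR⟩ h h' hderiv hposh hODE
    set k := p c * V c * h' c with hkdef
    have hkconst : ∀ x ∈ D, p x * V x * h' x = k :=
      fun x hx => constOn hDord hODE hx hcD
    have hh' : ∀ x ∈ D, h' x = k * f x := by
      intro x hx
      rw [← hkconst x hx, hf]
      rw [mul_comm (p x * V x) (h' x), mul_assoc, mul_inv_cancel₀ (hpVne x hx), mul_one]
    rcases eq_or_ne k 0 with hk0 | hk0
    · refine ⟨h c, fun x hx => ?_⟩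
      refine constOn hDord (fun y hy => ?_) hx hcD
      have := hderiv y hy
      rwa [hh' y hy, hk0, zero_mul] at this
    · exfalso
      have hFTC : ∀ x ∈ D, ∀ y ∈ D, h y - h x = k * ∫ t in x..y, f t := by
        intro x hx y hy
        have hsub := hDord.uIcc_subset hx hy
        have heq : ∫ t in x..y, h' t = k * ∫ t in x..y, f t := by
          rw [← intervalIntegral.integral_const_mul]
          exact intervalIntegral.integral_congr fun t ht => hh' t (hsub ht)
        rw [← heq]
        exact (intervalIntegral.integral_eq_sub_of_hasDerivAt
          (fun t ht => hderiv t (hsub ht))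
          (((continuousOn_const.mul hfc).mono hsub).congr
            (fun t ht => hh' t (hsub ht))).intervalIntegrable).symm
      have hmemD : ∀ x : ℝ, a < (x : EReal) → (x : EReal) < b → x ∈ D := by
        intro x h1 h2; rw [hDdef]; exact ⟨h1, h2⟩
      have hcab : a < (c : EReal) ∧ (c : EReal) < b := by rw [hDdef] at hcD; exact hcD
      rcases hk0.lt_or_gt with hkneg | hkpos
      · -- k < 0 : bound right integrals, contradict hR
        apply hR
        have hSeq : {x ∈ D | c < x} = {x : ℝ | c < x ∧ (x : EReal) < b} := by
          ext x
          rw [hDdef]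
          constructor
          · rintro ⟨⟨_, hxb⟩, hcx⟩; exact ⟨hcx, hxb⟩
          · rintro ⟨hcx, hxb⟩
            exact ⟨⟨lt_trans hcab.1 (EReal.coe_lt_coe_iff.2 hcx), hxb⟩, hcx⟩
        rw [hSeq, hf]
        apply auxRight (M := h c / (-k)) hcab.2
        · intro t htb hct
          have htD : t ∈ D := hmemD t (lt_trans hcab.1 (EReal.coe_lt_coe_iff.2 hct)) htb
          exact ((hfc.mono (hDord.out hcD htD)).integrableOn_Icc).mono_set
            Ioc_subset_Icc_self
        · intro x hxb hcx
          rcases eq_or_lt_of_le hcx with rfl | hcx'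
          · exact (hfpos _ hcD).le
          · exact (hfpos x (hmemD x (lt_trans hcab.1 (EReal.coe_lt_coe_iff.2 hcx')) hxb)).le
        · intro t htb hct
          have htD : t ∈ D := hmemD t (lt_trans hcab.1 (EReal.coe_lt_coe_iff.2 hct)) htb
          have hft := hFTC c hcD t htD
          have hpt := hposh t htD
          have hpc := hposh c hcD
          rw [← intervalIntegral.integral_of_le hct.le]
          have hkpos' : 0 < -k := neg_pos.2 hkneg
          have hint : ∫ x in c..t, f x = (h c - h t) / (-k) := by
            field_simp
            linarith [hft]
          rw [hint]
          exact div_le_div_of_nonneg_right' hpt hkpos'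
      · -- k > 0 : bound left integrals, contradict hL
        apply hL
        have hSeq : {x ∈ D | x < c} = {x : ℝ | a < (x : EReal) ∧ x < c} := by
          ext x
          rw [hDdef]
          constructor
          · rintro ⟨⟨hax, _⟩, hxc⟩; exact ⟨hax, hxc⟩
          · rintro ⟨hax, hxc⟩
            exact ⟨⟨hax, lt_trans (EReal.coe_lt_coe_iff.2 hxc) hcab.2⟩, hxc⟩
        rw [hSeq, hf]
        apply auxLeft (M := h c / k) hcab.1
        · intro t hat htc
          have htD : t ∈ D := hmemD t hat (lt_trans (EReal.coe_lt_coe_iff.2 htc) hcab.2)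
          exact ((hfc.mono (hDord.out htD hcD)).integrableOn_Icc).mono_set
            Ioc_subset_Icc_self
        · intro x hax hxc
          rcases eq_or_lt_of_le hxc with rfl | hxc'
          · exact (hfpos _ hcD).le
          · exact (hfpos x (hmemD x hax (lt_trans (EReal.coe_lt_coe_iff.2 hxc') hcab.2))).le
        · intro t hat htc
          have htD : t ∈ D := hmemD t hat (lt_trans (EReal.coe_lt_coe_iff.2 htc) hcab.2)
          have hft := hFTC t htD c hcD
          have hpt := hposh t htD
          have hpc := hposh c hcD
          rw [← intervalIntegral.integral_of_le htc.le]
          have hint : ∫ x in t..c, f x = (h c - h t) / k := by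
            field_simp
            linarith [hft]
          rw [hint]
          exact div_le_div_of_nonneg_right' hpt hkpos
end

section
/- The prior p(x₁,x₂) = x₁x₂/(x₁+x₂)² on D = {x₁ > 0, x₂ > 0} satisfies all three boundary divergence conditions: ∫_0^1 p(x₁,x₂)^{-1} dx₁ = ∞ for every x₂ > 0, ∫_0^1 p(x₁,x₂)^{-1} dx₂ = ∞ for every x₁ > 0, and ∫_1^∞ (r · p(rs₁, rs₂))^{-1} dr = ∞ for every unit vector (s₁,s₂) with s₁, s₂ > 0. -/
open Real MeasureTheory

/-!
Near an edge of the quadrant, `1 / p(x₁, x₂) = (x₁ + x₂)² / (x₁ x₂) ≥ x₂ / x₁`, which is not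
integrable at `x₁ = 0`; the second condition is the first one with the roles of `x₁, x₂` swapped.
Along a ray, `p` is constant by homogeneity of degree `0`, so `1 / (r p(r s))` is a positive
multiple of `1 / r`, which is not integrable at infinity.
-/

noncomputable def prior (x₁ x₂ : ℝ) : ℝ := x₁ * x₂ / (x₁ + x₂) ^ 2

lemma prior_comm (x₁ x₂ : ℝ) : prior x₁ x₂ = prior x₂ x₁ := by
  unfold prior; ring

lemma prior_mul_mul {r : ℝ} (hr : r ≠ 0) (s₁ s₂ : ℝ) :
    prior (r * s₁) (r * s₂) = prior s₁ s₂ := by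
  unfold prior
  rw [← mul_add, mul_pow, mul_mul_mul_comm, ← sq, mul_div_mul_left _ _ (pow_ne_zero 2 hr)]

lemma prior_pos {x₁ x₂ : ℝ} (h₁ : 0 < x₁) (h₂ : 0 < x₂) : 0 < prior x₁ x₂ := by
  unfold prior; positivity

lemma mul_inv_le_inv_prior {x₁ x₂ : ℝ} (h₁ : 0 < x₁) (h₂ : 0 < x₂) :
    x₂ * x₁⁻¹ ≤ (prior x₁ x₂)⁻¹ := by
  rw [prior, inv_div, le_div_iff₀ (by positivity), mul_assoc, inv_mul_cancel_left₀ h₁.ne']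
  nlinarith

lemma not_integrableOn_Ioo_zero_one_inv : ¬ IntegrableOn (·⁻¹) (Set.Ioo (0 : ℝ) 1) := by
  rw [← intervalIntegrable_iff_integrableOn_Ioo_of_le zero_le_one, intervalIntegrable_inv_iff]
  simp

lemma not_integrableOn_inv_prior_left {x₂ : ℝ} (h₂ : 0 < x₂) :
    ¬ IntegrableOn (fun x₁ => (prior x₁ x₂)⁻¹) (Set.Ioo (0 : ℝ) 1) := by
  intro h
  have hdom : IntegrableOn (fun x₁ : ℝ => x₂ * x₁⁻¹) (Set.Ioo (0 : ℝ) 1) := by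
    refine h.mono' (by fun_prop) ?_
    filter_upwards [ae_restrict_mem measurableSet_Ioo] with x₁ hx₁
    rw [Real.norm_of_nonneg (mul_nonneg h₂.le (inv_nonneg.2 hx₁.1.le))]
    exact mul_inv_le_inv_prior hx₁.1 h₂
  exact not_integrableOn_Ioo_zero_one_inv <|
    (integrable_const_mul_iff (isUnit_iff_ne_zero.2 h₂.ne') _).1 hdom

lemma inv_mul_prior_mul_mul (s₁ s₂ r : ℝ) :
    (r * prior (r * s₁) (r * s₂))⁻¹ = (prior s₁ s₂)⁻¹ * r⁻¹ := by
  rcases eq_or_ne r 0 with rfl | hr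
  · simp -- both sides are junk `0⁻¹ = 0`
  · rw [prior_mul_mul hr, mul_inv, mul_comm]

lemma not_integrableOn_inv_mul_prior_ray {s₁ s₂ : ℝ} (h₁ : 0 < s₁) (h₂ : 0 < s₂) :
    ¬ IntegrableOn (fun r => (r * prior (r * s₁) (r * s₂))⁻¹) (Set.Ioi (1 : ℝ)) := by
  simp only [inv_mul_prior_mul_mul s₁ s₂]
  rw [IntegrableOn,
    integrable_const_mul_iff (isUnit_iff_ne_zero.2 (inv_ne_zero (prior_pos h₁ h₂).ne'))]
  exact not_integrableOn_Ioi_inv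

/-- the prior `p(x₁,x₂) = x₁x₂/(x₁+x₂)²` on the positive quadrant
satisfies all three boundary divergence conditions. -/
theorem stmt12 (p : ℝ → ℝ → ℝ) (hp : ∀ x₁ x₂, p x₁ x₂ = x₁ * x₂ / (x₁ + x₂) ^ 2) :
    (∀ x₂ : ℝ, 0 < x₂ →
        ¬ IntegrableOn (fun x₁ => (p x₁ x₂)⁻¹) (Set.Ioo (0 : ℝ) 1)) ∧
    (∀ x₁ : ℝ, 0 < x₁ →
        ¬ IntegrableOn (fun x₂ => (p x₁ x₂)⁻¹) (Set.Ioo (0 : ℝ) 1)) ∧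
    (∀ s₁ s₂ : ℝ, 0 < s₁ → 0 < s₂ → s₁ ^ 2 + s₂ ^ 2 = 1 →
        ¬ IntegrableOn (fun r => (r * p (r * s₁) (r * s₂))⁻¹) (Set.Ioi (1 : ℝ))) := by
  obtain rfl : p = prior := funext₂ hp
  refine ⟨fun x₂ h₂ => not_integrableOn_inv_prior_left h₂, fun x₁ h₁ => ?_,
    fun s₁ s₂ h₁ h₂ _ => not_integrableOn_inv_mul_prior_ray h₁ h₂⟩
  simpa only [prior_comm x₁] using not_integrableOn_inv_prior_left h₁
end

section
/- If p is a positive C² function on open D ⊆ ℝ^d satisfying Σ_{i,j} ∂_i(V_{ij} ∂_j p) = 0 (the uniform-matching equation), then the asymptotic risk of p relative to the uniform prior is R(b^p) − R(0) = −(1/2) Σ_{i,j} V_{ij} (∂_i p)(∂_j p)/p² ≤ 0 pointwise, with strict inequality wherever ∇p ≠ 0 and V is positive definite. -/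
/-!
For `b = ∇p / p` the quotient rule gives
`∂_i (V_ij b_j) = ∂_i (V_ij ∂_j p) / p - V_ij ∂_j p ∂_i p / p²`, so
`R(b) = (Σ_ij ∂_i (V_ij ∂_j p)) / p - ½ (∇p)ᵀ V ∇p / p²`.
The matching equation kills the first term, and the second has the sign of the quadratic form of `V`.
-/

open Real

open Filter Topology Finset

noncomputable def risk {d : ℕ} (V : Fin d → Fin d → (Fin d → ℝ) → ℝ)
    (b : Fin d → (Fin d → ℝ) → ℝ) (x : Fin d → ℝ) : ℝ :=
  ∑ i, ∑ j, (pd i (fun y => V i j y * b j y) x + (1/2) * b i x * b j x * V i j x)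

section PartialDerivative

variable {d : ℕ} {f g : (Fin d → ℝ) → ℝ} {x : Fin d → ℝ}

theorem pd_congr_of_eventuallyEq (i : Fin d) (h : f =ᶠ[𝓝 x] g) : pd i f x = pd i g x := by
  rw [pd, h.fderiv_eq, pd]

theorem pd_log (i : Fin d) (hf : DifferentiableAt ℝ f x) (hx : f x ≠ 0) :
    pd i (fun y => log (f y)) x = pd i f x / f x := by
  simp [pd, fderiv.log hf hx, div_eq_inv_mul]

theorem pd_div (i : Fin d) (hf : DifferentiableAt ℝ f x) (hg : DifferentiableAt ℝ g x)
    (hx : g x ≠ 0) :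
    pd i (fun y => f y / g y) x = pd i f x / g x - f x * pd i g x / g x ^ 2 := by
  have hinv : HasFDerivAt (fun y => (g y)⁻¹) (-(g x ^ 2)⁻¹ • fderiv ℝ g x) x :=
    (hasDerivAt_inv hx).comp_hasFDerivAt x hg.hasFDerivAt
  simp only [pd, div_eq_mul_inv, (hf.hasFDerivAt.fun_mul hinv).fderiv]
  simp only [add_apply, smul_apply, smul_eq_mul]
  ring

theorem ContDiffAt.differentiableAt_pd {n : WithTop ℕ∞} (hf : ContDiffAt ℝ n f x) (hn : 2 ≤ n)
    (i : Fin d) : DifferentiableAt ℝ (pd i f) x :=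
  ((hf.fderiv_right (m := 1) hn).differentiableAt one_ne_zero).clm_apply
    (differentiableAt_const _)

end PartialDerivative

section Risk

variable {d : ℕ} {D : Set (Fin d → ℝ)} {p : (Fin d → ℝ) → ℝ}

theorem risk_eq_of_eq_pd_div (hD : IsOpen D) {V : Fin d → Fin d → (Fin d → ℝ) → ℝ}
    (hV : ∀ i j, ContDiffOn ℝ 1 (V i j) D) (hp : ContDiffOn ℝ 2 p D) (hppos : ∀ x ∈ D, 0 < p x)
    {b : Fin d → (Fin d → ℝ) → ℝ} (hb : ∀ j, ∀ y ∈ D, b j y = pd j p y / p y)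
    {x : Fin d → ℝ} (hx : x ∈ D) :
    risk V b x = (∑ i, ∑ j, pd i (fun y => V i j y * pd j p y) x) / p x
      - (1/2) * (∑ i, ∑ j, V i j x * pd i p x * pd j p x) / p x ^ 2 := by
  have hpx := (hppos x hx).ne'
  have hpx_diff : ContDiffAt ℝ 2 p x := hp.contDiffAt (hD.mem_nhds hx)
  have hterm : ∀ i j, pd i (fun y => V i j y * b j y) x
      = pd i (fun y => V i j y * pd j p y) x / p x - V i j x * pd j p x * pd i p x / p x ^ 2 := by
    intro i j
    have hloc : (fun y => V i j y * b j y) =ᶠ[𝓝 x] fun y => V i j y * pd j p y / p y := by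
      filter_upwards [hD.mem_nhds hx] with y hy
      rw [hb j y hy, mul_div_assoc]
    have hVx : DifferentiableAt ℝ (V i j) x :=
      ((hV i j).contDiffAt (hD.mem_nhds hx)).differentiableAt one_ne_zero
    rw [pd_congr_of_eventuallyEq i hloc,
      pd_div i (hVx.fun_mul (hpx_diff.differentiableAt_pd le_rfl j))
        (hpx_diff.differentiableAt (by norm_num)) hpx]
  simp only [risk, sum_div, mul_sum, ← sum_sub_distrib]
  refine sum_congr rfl fun i _ => sum_congr rfl fun j _ => ?_
  rw [hterm, hb i x hx, hb j x hx]
  field_simp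
  ring

end Risk

theorem stmt14_general {d : ℕ} (D : Set (Fin d → ℝ)) (hD : IsOpen D)
    (V : Fin d → Fin d → (Fin d → ℝ) → ℝ)
    (hV : ∀ i j, ContDiffOn ℝ 1 (V i j) D)
    (hVpsd : ∀ x ∈ D, ∀ c : Fin d → ℝ, 0 ≤ ∑ i, ∑ j, c i * c j * V i j x)
    (p : (Fin d → ℝ) → ℝ) (hp : ContDiffOn ℝ 2 p D) (hppos : ∀ x ∈ D, 0 < p x)
    (hmatch : ∀ x ∈ D, ∑ i, ∑ j, pd i (fun y => V i j y * pd j p y) x = 0)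
    (bp : Fin d → (Fin d → ℝ) → ℝ)
    (hbp : ∀ i x, bp i x = pd i (fun y => Real.log (p y)) x) :
    ∀ x ∈ D,
      (∑ i, ∑ j, (pd i (fun y => V i j y * bp j y) x + (1/2) * bp i x * bp j x * V i j x))
          = -(1/2) * (∑ i, ∑ j, V i j x * pd i p x * pd j p x) / (p x) ^ 2 ∧
      (∑ i, ∑ j, (pd i (fun y => V i j y * bp j y) x + (1/2) * bp i x * bp j x * V i j x))
          ≤ 0 ∧
      ((∃ i, pd i p x ≠ 0) →
        (∀ c : Fin d → ℝ, c ≠ 0 → 0 < ∑ i, ∑ j, c i * c j * V i j x) →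
        (∑ i, ∑ j, (pd i (fun y => V i j y * bp j y) x
            + (1/2) * bp i x * bp j x * V i j x)) < 0) := by
  intro x hx
  have hb : ∀ j, ∀ y ∈ D, bp j y = pd j p y / p y := fun j y hy =>
    (hbp j y).trans <| pd_log j
      ((hp.contDiffAt (hD.mem_nhds hy)).differentiableAt (by norm_num)) (hppos y hy).ne'
  have hrisk : risk V bp x = -(1/2) * (∑ i, ∑ j, V i j x * pd i p x * pd j p x) / p x ^ 2 := by
    rw [risk_eq_of_eq_pd_div hD hV hp hppos hb hx, hmatch x hx]
    ring
  have hform : ∑ i, ∑ j, V i j x * pd i p x * pd j p x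
      = ∑ i, ∑ j, pd i p x * pd j p x * V i j x :=
    sum_congr rfl fun i _ => sum_congr rfl fun j _ => by ring
  have hp2 : 0 < p x ^ 2 := by have := hppos x hx; positivity
  refine ⟨hrisk, ?_, fun ⟨i, hi⟩ hVpd => ?_⟩
  · change risk V bp x ≤ 0
    rw [hrisk, hform]
    have := hVpsd x hx fun i => pd i p x
    exact div_nonpos_of_nonpos_of_nonneg (by linarith) hp2.le
  · change risk V bp x < 0
    rw [hrisk, hform]
    have := hVpd (fun i => pd i p x) fun h => hi (congrFun h i)
    exact div_neg_of_neg_of_pos (by linarith) hp2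

/-- if positive `p ∈ C²(D)` satisfies `Σ_{ij} ∂_i(V_{ij}∂_j p) = 0`, then
with `b^p_i = ∂_i log p`, the risk of `p` relative to the uniform is
`R(b^p) = −½ Σ_{ij} V_{ij} ∂_i p ∂_j p / p² ≤ 0`, strictly negative wherever
`∇p ≠ 0` and `V` is positive definite. -/
theorem stmt14 {d : ℕ} (D : Set (Fin d → ℝ)) (hD : IsOpen D)
    (V : Fin d → Fin d → (Fin d → ℝ) → ℝ)
    (hV : ∀ i j, ContDiffOn ℝ 1 (V i j) D)
    (hVsym : ∀ i j x, V i j x = V j i x)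
    (hVpsd : ∀ x ∈ D, ∀ c : Fin d → ℝ, 0 ≤ ∑ i, ∑ j, c i * c j * V i j x)
    (p : (Fin d → ℝ) → ℝ) (hp : ContDiffOn ℝ 2 p D) (hppos : ∀ x ∈ D, 0 < p x)
    (hmatch : ∀ x ∈ D, ∑ i, ∑ j, pd i (fun y => V i j y * pd j p y) x = 0)
    (bp : Fin d → (Fin d → ℝ) → ℝ)
    (hbp : ∀ i x, bp i x = pd i (fun y => Real.log (p y)) x) :
    ∀ x ∈ D,
      (∑ i, ∑ j, (pd i (fun y => V i j y * bp j y) x + (1/2) * bp i x * bp j x * V i j x))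
          = -(1/2) * (∑ i, ∑ j, V i j x * pd i p x * pd j p x) / (p x) ^ 2 ∧
      (∑ i, ∑ j, (pd i (fun y => V i j y * bp j y) x + (1/2) * bp i x * bp j x * V i j x))
          ≤ 0 ∧
      ((∃ i, pd i p x ≠ 0) →
        (∀ c : Fin d → ℝ, c ≠ 0 → 0 < ∑ i, ∑ j, c i * c j * V i j x) →
        (∑ i, ∑ j, (pd i (fun y => V i j y * bp j y) x
            + (1/2) * bp i x * bp j x * V i j x)) < 0) :=
  stmt14_general D hD V hV hVpsd p hp hppos hmatch bp hbp
end
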